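/- arXiv:2403.11436 — 3 statements merged into one kernel-verified Lean document; each statement's English description precedes it below -/
import Mathlib

section
/- For any integer n ≥ 1, any θ ∈ 𝔽_q, and any elements α_1, …, α_n ∈ 𝔽_q, the determinant of the n × n matrix over 𝔽_q whose j-th column is (1, α_j, α_j^2, …, α_j^{n-2}, α_j^{n-1} − θ α_j^n)^T equals V(α_1, …, α_n) · (1 − θ · Σ_{i=1}^{n} α_i). -/
/-!
Expanding the last row `α_j^{n-1} - θ α_j^n` by linearity, the determinant is the Vandermonde
determinant minus `θ` times the determinant with last row `α_j^n`. The polynomial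
`P = ∏ (X - α_i)` is monic of degree `n` and vanishes at every `α_j`, so `α_j^n` is the
combination `-∑_{k<n} P_k α_j^k` of the other rows; only the term `k = n - 1` survives in the
determinant, and `-P_{n-1} = ∑ α_i`.
-/

open Finset Polynomial Matrix

section

variable {R : Type*} [CommRing R]

lemma Polynomial.Monic.pow_natDegree_eq_neg_sum_of_isRoot {p : R[X]} (hp : p.Monic) {x : R}
    (hx : p.IsRoot x) : x ^ p.natDegree = -∑ k ∈ range p.natDegree, p.coeff k * x ^ k := by
  have h := hx.eq_zero
  rw [hp.as_sum, eval_add, eval_pow, eval_X, eval_finsetSum] at h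
  simp only [eval_mul, eval_C, eval_pow, eval_X] at h
  linear_combination h

lemma Matrix.det_vandermonde_updateCol_last_pow (n : ℕ) (α : Fin (n + 1) → R) :
    ((vandermonde α).updateCol (Fin.last n) fun j => α j ^ (n + 1)).det
      = (∑ i, α i) * (vandermonde α).det := by
  nontriviality R
  set P : R[X] := ∏ i, (X - C (α i))
  have hmonic : P.Monic := monic_prod_of_monic _ _ fun i _ => monic_X_sub_C (α i)
  have hdeg : P.natDegree = n + 1 := by simp [P]
  have hcomb : (fun j => α j ^ (n + 1))
      = fun j => ∑ k : Fin (n + 1), (-P.coeff k) • vandermonde α j k := by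
    ext j
    have hroot : P.IsRoot (α j) := by
      simp only [P, IsRoot, eval_prod, eval_sub, eval_X, eval_C]
      exact prod_eq_zero (mem_univ j) (sub_self _)
    have hpow := hmonic.pow_natDegree_eq_neg_sum_of_isRoot hroot
    rw [hdeg] at hpow
    rw [hpow, ← Fin.sum_univ_eq_sum_range, ← sum_neg_distrib]
    simp [vandermonde_apply]
  have hcoeff : -P.coeff n = ∑ i, α i := by
    simpa using congrArg Neg.neg (prod_X_sub_C_coeff_card_pred univ α (by simp))
  rw [hcomb, det_updateCol_sum, Fin.val_last, hcoeff, smul_eq_mul]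

end

theorem det_twisted_vandermonde_general {F : Type*} [Field F]
    (n : ℕ) (θ : F) (α : Fin n → F) :
    (Matrix.of fun i j : Fin n =>
        if (i : ℕ) = n - 1 then α j ^ (n - 1) - θ * α j ^ n else α j ^ (i : ℕ)).det
      = (∏ i : Fin n, ∏ j ∈ Finset.Ioi i, (α j - α i)) * (1 - θ * ∑ i, α i) := by
  cases n with
  | zero => simp
  | succ n =>
    have hsplit : (Matrix.of fun i j : Fin (n + 1) =>
          if (i : ℕ) = n + 1 - 1 then α j ^ (n + 1 - 1) - θ * α j ^ (n + 1) else α j ^ (i : ℕ))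
        = ((vandermonde α).updateCol (Fin.last n)
            ((fun j => vandermonde α j (Fin.last n)) + (-θ) • fun j => α j ^ (n + 1)))ᵀ := by
      ext i j
      by_cases hi : i = Fin.last n
      · simp [hi, vandermonde_apply, sub_eq_add_neg]
      · have hi' : (i : ℕ) ≠ n := fun h => hi (Fin.ext h)
        simp [hi, hi', vandermonde_apply]
    rw [hsplit, det_transpose, det_updateCol_add, det_updateCol_smul, updateCol_eq_self,
      det_vandermonde_updateCol_last_pow, det_vandermonde]
    ring

/-- For `n ≥ 1`, `θ ∈ 𝔽_q` and `α_1, …, α_n ∈ 𝔽_q`, the determinant of the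
`n × n` matrix whose `j`-th column is `(1, α_j, …, α_j^{n-2}, α_j^{n-1} - θ α_j^n)ᵀ` equals
`V(α_1, …, α_n) · (1 - θ · Σ α_i)`. -/
theorem det_twisted_vandermonde {F : Type*} [Field F] [Fintype F]
    (n : ℕ) (hn : 1 ≤ n) (θ : F) (α : Fin n → F) :
    (Matrix.of fun i j : Fin n =>
        if (i : ℕ) = n - 1 then α j ^ (n - 1) - θ * α j ^ n else α j ^ (i : ℕ)).det
      = (∏ i : Fin n, ∏ j ∈ Finset.Ioi i, (α j - α i)) * (1 - θ * ∑ i, α i) :=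
  det_twisted_vandermonde_general n θ α
end

section
/- Let A ⊆ 𝔽_q with |A| = n, let 1 < k < n, and let θ ∈ 𝔽_q with θ ≠ 0. Then the covering radius of TRS_k(A, θ) equals n − k. -/
open Polynomial Finset

/-- The set `S_{k,θ}` of twisted polynomials
`Σ_{i=0}^{k-2} f_i x^i + f_{k-1}(x^{k-1} + θ x^k)`. -/
def Sset (F : Type*) [Field F] (k : ℕ) (θ : F) : Set (Polynomial F) :=
  {p | ∃ f : ℕ → F, p = (∑ i ∈ Finset.range (k - 1), Polynomial.C (f i) * Polynomial.X ^ i)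
        + Polynomial.C (f (k - 1)) * (Polynomial.X ^ (k - 1) + Polynomial.C θ * Polynomial.X ^ k)}

/-- The twisted Reed–Solomon code `TRS_k(A, θ)` for the evaluation sequence `α`. -/
def TRS {F : Type*} [Field F] {n : ℕ} (α : Fin n → F) (k : ℕ) (θ : F) : Set (Fin n → F) :=
  {v | ∃ p ∈ Sset F k θ, v = fun j => p.eval (α j)}

/-- The (Hamming) error distance `d(u, C)` from a word `u` to a code `C`. -/
noncomputable def distTo {F : Type*} [DecidableEq F] {n : ℕ} (u : Fin n → F)
    (C : Set (Fin n → F)) : ℕ :=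
  sInf {d | ∃ c ∈ C, hammingDist u c = d}

/-- The covering radius `ρ(C) = max_u d(u, C)` of a code `C`. -/
noncomputable def covRad {F : Type*} [DecidableEq F] {n : ℕ} (C : Set (Fin n → F)) : ℕ :=
  sSup {d | ∃ u, distTo u C = d}

/-- `u` is a deep hole of `C` if `d(u, C) = ρ(C)`. -/
def IsDeepHole {F : Type*} [DecidableEq F] {n : ℕ} (C : Set (Fin n → F)) (u : Fin n → F) :
    Prop :=
  distTo u C = covRad C

/-- The column vector `c_{r,θ}(a) = (1, a, …, a^{r-2}, a^{r-1} - θ a^r)ᵀ ∈ 𝔽_q^r`. -/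
def crv (F : Type*) [Field F] (r : ℕ) (θ a : F) : Fin r → F :=
  fun i => if (i : ℕ) = r - 1 then a ^ (r - 1) - θ * a ^ r else a ^ (i : ℕ)

/-- The parity-check matrix `H` whose `j`-th column is `c_{r,θ}(α_j)`. -/
def Hmat {F : Type*} [Field F] {n : ℕ} (r : ℕ) (θ : F) (α : Fin n → F) :
    Matrix (Fin r) (Fin n) F :=
  Matrix.of fun i j => crv F r θ (α j) i

section Aux

set_option linter.unusedSectionVars false

variable {F : Type*} [Field F] [DecidableEq F]

lemma coeff_sum_CX (f : ℕ → F) (m j : ℕ) :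
    (∑ i ∈ Finset.range m, C (f i) * X ^ i).coeff j = if j < m then f j else 0 := by
  simp only [finset_sum_coeff, coeff_C_mul, coeff_X_pow, mul_ite, mul_one, mul_zero]
  rw [Finset.sum_ite_eq (Finset.range m) j]
  simp

lemma coeff_twisted (f : ℕ → F) (k : ℕ) (θ : F) (j : ℕ) :
    ((∑ i ∈ Finset.range (k-1), C (f i) * X ^ i)
        + C (f (k-1)) * (X ^ (k-1) + C θ * X ^ k)).coeff j
    = (if j < k - 1 then f j else 0)
        + f (k-1) * ((if j = k - 1 then 1 else 0) + θ * (if j = k then 1 else 0)) := by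
  rw [coeff_add, coeff_sum_CX, coeff_C_mul, coeff_add, coeff_X_pow, coeff_C_mul, coeff_X_pow]

lemma mem_Sset_iff {k : ℕ} (hk : 0 < k) (θ : F) (p : F[X]) :
    p ∈ Sset F k θ ↔ p.natDegree ≤ k ∧ p.coeff k = θ * p.coeff (k - 1) := by
  constructor
  · rintro ⟨f, rfl⟩
    constructor
    · rw [natDegree_le_iff_coeff_eq_zero]
      intro m hm
      rw [coeff_twisted]
      have h1 : ¬ m < k - 1 := by omega
      have h2 : m ≠ k - 1 := by omega
      have h3 : m ≠ k := by omega
      simp [h1, h2, h3]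
    · rw [coeff_twisted, coeff_twisted]
      have h1 : ¬ k < k - 1 := by omega
      have h2 : ¬ k - 1 < k - 1 := by omega
      have h3 : k ≠ k - 1 := by omega
      have h4 : k - 1 ≠ k := by omega
      simp [h1, h2, h3, h4]
      ring
  · rintro ⟨h1, h2⟩
    refine ⟨fun i => p.coeff i, ?_⟩
    ext j
    rw [coeff_twisted]
    rcases lt_trichotomy j (k-1) with h | h | h
    · have e1 : j ≠ k - 1 := by omega
      have e2 : j ≠ k := by omega
      simp [h, e1, e2]
    · have e2 : j ≠ k := by omega
      have e3 : ¬ (k - 1 < k - 1) := Nat.lt_irrefl _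
      have e4 : k - 1 ≠ k := by omega
      simp [h, e2, e3, e4]
    · have hj1 : ¬ j < k - 1 := by omega
      have hj2 : j ≠ k - 1 := by omega
      by_cases hjk : j = k
      · subst hjk
        simp only [hj1, if_false, hj2, if_true, zero_add, h2]
        ring
      · have : p.coeff j = 0 := coeff_eq_zero_of_natDegree_lt (by omega)
        simp [hj1, hj2, hjk, this]

lemma lower_bound {n k : ℕ} (hk1 : 1 < k) (α : Fin n → F) (hα : Function.Injective α)
    (θ : F) (hθ : θ ≠ 0) :
    ∀ c ∈ TRS α k θ, n - k ≤ hammingDist (fun j => α j ^ (k - 1)) c := by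
  classical
  rintro _ ⟨p, hp, rfl⟩
  rw [mem_Sset_iff (by omega) θ p] at hp
  set q : F[X] := X ^ (k - 1) - p with hq
  have hq0 : q ≠ 0 := by
    intro h
    have hpX : p = X ^ (k - 1) := by
      have := sub_eq_zero.mp h
      exact this.symm
    rw [hpX, coeff_X_pow, coeff_X_pow] at hp
    have e1 : k ≠ k - 1 := by omega
    simp [e1] at hp
    exact hθ hp.symm
  have hqd : q.natDegree ≤ k := by
    refine le_trans (natDegree_sub_le _ _) (max_le ?_ hp.1)
    rw [natDegree_X_pow]
    omega
  set Z := Finset.filter (fun j => q.eval (α j) = 0) Finset.univ with hZdef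
  have hZ : Z.card ≤ k := by
    have hsub : Z.image α ⊆ q.roots.toFinset := by
      intro x hx
      obtain ⟨j, hj, rfl⟩ := Finset.mem_image.mp hx
      rw [Multiset.mem_toFinset, mem_roots hq0]
      exact (Finset.mem_filter.mp hj).2
    calc Z.card = (Z.image α).card := (Finset.card_image_of_injective Z hα).symm
      _ ≤ q.roots.toFinset.card := Finset.card_le_card hsub
      _ ≤ Multiset.card q.roots := Multiset.toFinset_card_le _
      _ ≤ q.natDegree := q.card_roots'
      _ ≤ k := hqd
  have hkey : hammingDist (fun j => α j ^ (k - 1)) (fun j => p.eval (α j))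
      = (Finset.filter (fun j => α j ^ (k - 1) ≠ p.eval (α j)) Finset.univ).card := rfl
  have h2 : Finset.filter (fun j => α j ^ (k - 1) ≠ p.eval (α j)) Finset.univ
      = Finset.univ \ Z := by
    rw [hZdef, ← Finset.filter_not]
    exact Finset.filter_congr (fun j _ => by simp [hq, sub_eq_zero])
  rw [hkey, h2, Finset.card_sdiff_of_subset (Finset.subset_univ Z), Finset.card_univ, Fintype.card_fin]
  exact Nat.sub_le_sub_left hZ n

lemma upper_bound {n k : ℕ} (hk1 : 1 < k) (hkn : k < n) (α : Fin n → F)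
    (hα : Function.Injective α) (θ : F) (hθ : θ ≠ 0) (u : Fin n → F) :
    ∃ c ∈ TRS α k θ, hammingDist u c ≤ n - k := by
  classical
  -- find a k-subset with nonzero 1 + θ * sum
  have hTex : ∃ T : Finset (Fin n), T.card = k ∧ 1 + θ * ∑ j ∈ T, α j ≠ 0 := by
    by_contra hcon
    push_neg at hcon
    obtain ⟨T0, _, hT0⟩ := Finset.exists_subset_card_eq
      (show k + 1 ≤ (Finset.univ : Finset (Fin n)).card by
        simp [Finset.card_univ, Fintype.card_fin]; omega)
    obtain ⟨a, ha, b, hb, hab⟩ := Finset.one_lt_card.mp (show 1 < T0.card by omega)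
    have h1 := hcon (T0.erase a) (by rw [Finset.card_erase_of_mem ha, hT0]; omega)
    have h2 := hcon (T0.erase b) (by rw [Finset.card_erase_of_mem hb, hT0]; omega)
    rw [Finset.sum_erase_eq_sub ha] at h1
    rw [Finset.sum_erase_eq_sub hb] at h2
    have : θ * α a = θ * α b := by linear_combination h2 - h1
    exact hab (hα (mul_left_cancel₀ hθ this))
  obtain ⟨T, hTcard, hTne⟩ := hTex
  set e : F := ∑ j ∈ T, α j with he
  have hvs : Set.InjOn α T := hα.injOn
  set L : F[X] := Lagrange.interpolate T α u with hL
  have hLdeg : L.degree < (k : WithBot ℕ) := by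
    have := Lagrange.degree_interpolate_lt (r := u) hvs
    rwa [hTcard] at this
  have hLnat : L.natDegree ≤ k := natDegree_le_iff_degree_le.mpr (le_of_lt hLdeg)
  have hLk : L.coeff k = 0 := coeff_eq_zero_of_degree_lt hLdeg
  set N : F[X] := ∏ j ∈ T, (X - C (α j)) with hN
  have hNmonic : N.Monic := monic_prod_of_monic _ _ (fun j _ => monic_X_sub_C _)
  have hNdeg : N.natDegree = k := by
    rw [hN, natDegree_prod_of_monic _ _ (fun j _ => monic_X_sub_C _)]
    simp [natDegree_X_sub_C, hTcard]
  have hNk : N.coeff k = 1 := by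
    have := hNmonic.coeff_natDegree
    rwa [hNdeg] at this
  have hNk1 : N.coeff (k - 1) = -e := by
    have := prod_X_sub_C_coeff_card_pred T α (by rw [hTcard]; omega)
    rwa [hTcard] at this
  set c : F := θ * L.coeff (k - 1) / (1 + θ * e) with hc
  set p : F[X] := L + C c * N with hpdef
  have hck : c * (1 + θ * e) = θ * L.coeff (k - 1) := div_mul_cancel₀ _ hTne
  have hpk : p.coeff k = c := by
    rw [hpdef, coeff_add, hLk, coeff_C_mul, hNk]
    ring
  have hpk1 : p.coeff (k - 1) = L.coeff (k - 1) - c * e := by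
    rw [hpdef, coeff_add, coeff_C_mul, hNk1]
    ring
  have hpS : p ∈ Sset F k θ := by
    rw [mem_Sset_iff (by omega) θ p]
    refine ⟨?_, ?_⟩
    · refine le_trans (natDegree_add_le _ _) (max_le hLnat ?_)
      exact le_trans (natDegree_C_mul_le _ _) (le_of_eq hNdeg)
    · rw [hpk, hpk1]
      linear_combination hck
  refine ⟨fun j => p.eval (α j), ⟨p, hpS, rfl⟩, ?_⟩
  have hagree : ∀ j ∈ T, p.eval (α j) = u j := by
    intro j hj
    have hNz : N.eval (α j) = 0 := by
      rw [hN, eval_prod]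
      exact Finset.prod_eq_zero hj (by simp)
    rw [hpdef, eval_add, eval_mul, eval_C, hNz, mul_zero, add_zero, hL,
      Lagrange.eval_interpolate_at_node (v := α) (r := u) (s := T) hvs hj]
  have hsub : Finset.filter (fun j => u j ≠ p.eval (α j)) Finset.univ ⊆ Tᶜ := by
    intro j hj
    rw [Finset.mem_compl]
    intro hjT
    exact (Finset.mem_filter.mp hj).2 (hagree j hjT).symm
  calc hammingDist u (fun j => p.eval (α j))
      = (Finset.filter (fun j => u j ≠ p.eval (α j)) Finset.univ).card := rfl
    _ ≤ (Tᶜ).card := Finset.card_le_card hsub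
    _ = n - k := by rw [Finset.card_compl, hTcard, Fintype.card_fin]

end Aux

/-- For `A ⊆ 𝔽_q` with `|A| = n`, `1 < k < n` and `θ ≠ 0`,
the covering radius of `TRS_k(A, θ)` equals `n - k`. -/
theorem covRad_TRS {F : Type*} [Field F] [Fintype F] [DecidableEq F]
    (n k : ℕ) (hk1 : 1 < k) (hkn : k < n) (α : Fin n → F) (hα : Function.Injective α)
    (θ : F) (hθ : θ ≠ 0) :
    covRad (TRS α k θ) = n - k := by
  classical
  have hub : ∀ u : Fin n → F, distTo u (TRS α k θ) ≤ n - k := by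
    intro u
    obtain ⟨c, hc, hle⟩ := upper_bound hk1 hkn α hα θ hθ u
    exact le_trans (Nat.sInf_le ⟨c, hc, rfl⟩) hle
  set u0 : Fin n → F := fun j => α j ^ (k - 1) with hu0
  have hne : {d | ∃ c ∈ TRS α k θ, hammingDist u0 c = d}.Nonempty := by
    obtain ⟨c, hc, _⟩ := upper_bound hk1 hkn α hα θ hθ u0
    exact ⟨_, c, hc, rfl⟩
  have hlow : n - k ≤ distTo u0 (TRS α k θ) := by
    apply le_csInf hne
    rintro d ⟨c, hc, rfl⟩
    exact lower_bound hk1 α hα θ hθ c hc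
  have hdeep : distTo u0 (TRS α k θ) = n - k := le_antisymm (hub u0) hlow
  rw [covRad]
  apply le_antisymm
  · apply csSup_le (s := {d | ∃ u, distTo u (TRS α k θ) = d}) ⟨distTo u0 (TRS α k θ), u0, rfl⟩
    rintro d ⟨u, rfl⟩
    exact hub u
  · refine le_csSup ⟨n - k, ?_⟩ ⟨u0, hdeep⟩
    rintro d ⟨u, rfl⟩
    exact hub u
end

section
/- Let A ⊆ 𝔽_q with |A| = n, let 1 < k < n, let θ ∈ 𝔽_q with θ ≠ 0, let C = TRS_k(A, θ), and let u ∈ 𝔽_q^n. Let C′ = C + 𝔽_q·u be the linear code spanned by C and u. Then u is a deep hole of C if and only if C′ is an [n, k+1] MDS code, i.e., dim_{𝔽_q} C′ = k + 1 and the minimum Hamming distance of C′ equals n − k. -/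
open Polynomial Finset

/-- The minimum Hamming distance `min_{c ≠ c' ∈ C} d(c, c')` of a code `C`. -/
noncomputable def minDist {F : Type*} [DecidableEq F] {n : ℕ} (C : Set (Fin n → F)) : ℕ :=
  sInf {d | ∃ c ∈ C, ∃ c' ∈ C, c ≠ c' ∧ hammingDist c c' = d}

/-!
`TRS_k(A, θ)` is the evaluation at `A` of a `k`-dimensional space of polynomials of degree at
most `k`, so it has dimension `k` and every nonzero codeword has weight at least `n - k`. Every
coset of a `k`-dimensional code contains a word with `k` zeros, so `ρ ≤ n - k`, and the word
`(α^{k-1})_{α ∈ A}` attains `n - k` because `X^{k-1}` differs from every element of `S_{k,θ}` by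
a nonzero polynomial of degree at most `k`: its coefficients at `X^{k-1}` and `X^k` are
`1 - f_{k-1}` and `-θ f_{k-1}`.

For such a code `V`, if `d(u, V) = n - k` then `u ∉ V`, and a word `c + a u` with `c ∈ V`,
`a ≠ 0` has weight `d(u, -a⁻¹ c) ≥ n - k`, so `V + 𝔽 u` is an `[n, k + 1, n - k]` code.
Conversely, if `V + 𝔽 u` has dimension `k + 1` then `u ≠ c` for all `c ∈ V`, hence
`d(u, c) ≥ n - k`.
-/

open Module

section Singleton

variable {F ι : Type*} [Field F] [DecidableEq F] [Fintype ι] [DecidableEq ι]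

theorem Submodule.exists_mem_finrank_le_card_filter_eq (V : Submodule F (ι → F)) (u : ι → F) :
    ∃ c ∈ V, finrank F V ≤ #{j | c j = u j} := by
  induction hr : finrank F V generalizing V u with
  | zero => exact ⟨0, V.zero_mem, Nat.zero_le _⟩
  | succ r ih =>
    have hV : V ≠ ⊥ := by rintro rfl; simp at hr
    obtain ⟨v, hvV, hv0⟩ := Submodule.exists_mem_ne_zero_of_ne_bot hV
    obtain ⟨j₀, hj₀⟩ := Function.ne_iff.mp hv0
    let φ : Module.Dual F V := LinearMap.proj j₀ ∘ₗ V.subtype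
    have hφ : φ ≠ 0 := fun h => hj₀ (LinearMap.congr_fun h ⟨v, hvV⟩)
    let V₀ := (LinearMap.ker φ).map V.subtype
    have hV₀ : finrank F V₀ = r := by
      have := Module.Dual.finrank_ker_add_one_of_ne_zero hφ
      rw [Submodule.finrank_map_subtype_eq]
      omega
    obtain ⟨⟨w, hwV⟩, hwj₀⟩ := LinearMap.surjective hφ (u j₀)
    -- the value `1` at `j₀` keeps the inductive agreements away from `j₀`
    obtain ⟨c₀, hc₀, hcard⟩ := ih V₀ (Function.update (u - w) j₀ 1) hV₀
    obtain ⟨⟨c, hcV⟩, hcφ, rfl⟩ := Submodule.mem_map.mp hc₀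
    have hcj₀ : c j₀ = 0 := hcφ
    refine ⟨c + w, V.add_mem hcV hwV, ?_⟩
    have hsub : insert j₀ ({j | c j = Function.update (u - w) j₀ 1 j} : Finset ι) ⊆
        ({j | (c + w) j = u j} : Finset ι) := by
      intro j hj
      rcases mem_insert.mp hj with rfl | hj
      · simp only [mem_filter, mem_univ, true_and, Pi.add_apply, hcj₀, zero_add]
        exact hwj₀
      · have hne : j ≠ j₀ := by rintro rfl; simp [hcj₀] at hj
        simp only [mem_filter, mem_univ, true_and, Function.update_of_ne hne] at hj ⊢
        simp [hj]
    have hnot : j₀ ∉ ({j | c j = Function.update (u - w) j₀ 1 j} : Finset ι) := by simp [hcj₀]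
    have := card_le_card hsub
    rw [card_insert_of_notMem hnot] at this
    exact (Nat.add_le_add_right hcard 1).trans this

end Singleton

section Distance

variable {F : Type*} [DecidableEq F] {n : ℕ} {u : Fin n → F} {C : Set (Fin n → F)}

theorem distTo_le_hammingDist {c : Fin n → F} (hc : c ∈ C) : distTo u C ≤ hammingDist u c :=
  Nat.sInf_le ⟨c, hc, rfl⟩

theorem exists_hammingDist_eq_distTo (hC : C.Nonempty) :
    ∃ c ∈ C, hammingDist u c = distTo u C := by
  obtain ⟨c, hc⟩ := hC
  exact Nat.sInf_mem (s := {d | ∃ c ∈ C, hammingDist u c = d}) ⟨_, c, hc, rfl⟩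

theorem le_distTo (hC : C.Nonempty) {m : ℕ} (h : ∀ c ∈ C, m ≤ hammingDist u c) :
    m ≤ distTo u C := by
  obtain ⟨c, hc, hcd⟩ := exists_hammingDist_eq_distTo (u := u) hC
  exact hcd ▸ h c hc

theorem covRad_eq_of_forall_distTo_le {ρ : ℕ} (hle : ∀ u, distTo u C ≤ ρ) (hu : distTo u C = ρ) :
    covRad C = ρ :=
  IsGreatest.csSup_eq ⟨⟨u, hu⟩, by rintro _ ⟨v, rfl⟩; exact hle v⟩

theorem minDist_le_hammingDist {c c' : Fin n → F} (hc : c ∈ C) (hc' : c' ∈ C) (hne : c ≠ c') :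
    minDist C ≤ hammingDist c c' :=
  Nat.sInf_le ⟨c, hc, c', hc', hne, rfl⟩

theorem minDist_eq_of_forall_le_hammingDist {ρ : ℕ}
    (hle : ∀ c ∈ C, ∀ c' ∈ C, c ≠ c' → ρ ≤ hammingDist c c') {c c' : Fin n → F} (hc : c ∈ C)
    (hc' : c' ∈ C) (hne : c ≠ c') (hcc' : hammingDist c c' = ρ) : minDist C = ρ :=
  IsLeast.csInf_eq ⟨⟨c, hc, c', hc', hne, hcc'⟩,
    by rintro _ ⟨d, hd, d', hd', hdd', rfl⟩; exact hle d hd d' hd' hdd'⟩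

end Distance

section MDSExtension

variable {F : Type*} [Field F] [DecidableEq F] {n : ℕ} {V : Submodule F (Fin n → F)}
  {u : Fin n → F}

theorem distTo_le_sub_finrank (V : Submodule F (Fin n → F)) (u : Fin n → F) :
    distTo u V ≤ n - finrank F V := by
  obtain ⟨c, hcV, hc⟩ := V.exists_mem_finrank_le_card_filter_eq u
  have hsplit := card_filter_add_card_filter_not (s := univ) fun j => c j = u j
  rw [card_univ, Fintype.card_fin] at hsplit
  have hdist : hammingDist u c = #{j | ¬c j = u j} := by
    simp only [hammingDist, ne_comm]
  have := distTo_le_hammingDist (u := u) hcV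
  omega

theorem le_hammingNorm_of_mem_sup_span_singleton {ρ : ℕ}
    (hV : ∀ v ∈ V, v ≠ 0 → ρ ≤ hammingNorm v) (hu : ρ ≤ distTo u V) {x : Fin n → F}
    (hx : x ∈ V ⊔ Submodule.span F {u}) (hx0 : x ≠ 0) : ρ ≤ hammingNorm x := by
  obtain ⟨c, hc, y, hy, rfl⟩ := Submodule.mem_sup.mp hx
  obtain ⟨a, rfl⟩ := Submodule.mem_span_singleton.mp hy
  rcases eq_or_ne a 0 with rfl | ha
  · rw [zero_smul, add_zero] at hx0 ⊢
    exact hV c hc hx0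
  · have hscale : c + a • u = a • (-(-(a⁻¹ • c)) + u) := by
      rw [neg_neg, smul_add, smul_smul, mul_inv_cancel₀ ha, one_smul]
    rw [hscale, hammingNorm_smul (fun _ => IsSMulRegular.of_ne_zero ha),
      ← hammingDist_eq_hammingNorm, hammingDist_comm]
    exact hu.trans (distTo_le_hammingDist (V.neg_mem (V.smul_mem _ hc)))

theorem distTo_eq_sub_finrank_iff (hn : finrank F V < n)
    (hV : ∀ v ∈ V, v ≠ 0 → n - finrank F V ≤ hammingNorm v) (u : Fin n → F) :
    distTo u V = n - finrank F V ↔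
      finrank F (Submodule.span F (↑V ∪ {u})) = finrank F V + 1 ∧
        minDist (Submodule.span F (↑V ∪ {u}) : Set (Fin n → F)) = n - finrank F V := by
  rw [Submodule.span_union, Submodule.span_eq]
  have huW : u ∈ V ⊔ Submodule.span F {u} :=
    Submodule.mem_sup_right (Submodule.mem_span_singleton_self u)
  constructor
  · intro hu
    have hnot : u ∉ V := fun h => by
      have := distTo_le_hammingDist (u := u) h
      rw [hammingDist_self] at this
      omega
    obtain ⟨c, hc, hcd⟩ := exists_hammingDist_eq_distTo (u := u) ⟨0, V.zero_mem⟩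
    refine ⟨Submodule.finrank_sup_span_singleton hnot, minDist_eq_of_forall_le_hammingDist
      (fun x hx y hy hxy => ?_) huW (le_sup_left (a := V) hc) (fun h => hnot (h ▸ hc))
      (hcd.trans hu)⟩
    rw [hammingDist_eq_hammingNorm]
    exact le_hammingNorm_of_mem_sup_span_singleton hV hu.ge
      (Submodule.add_mem _ (Submodule.neg_mem _ hx) hy) (mt neg_add_eq_zero.mp hxy)
  · rintro ⟨hdim, hmin⟩
    have hnot : u ∉ V := fun h => by
      rw [sup_eq_left.mpr ((Submodule.span_singleton_le_iff_mem _ _).mpr h)] at hdim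
      omega
    refine le_antisymm (distTo_le_sub_finrank V u) (le_distTo ⟨0, V.zero_mem⟩ fun c hc => ?_)
    exact hmin ▸ minDist_le_hammingDist huW (le_sup_left (a := V) hc) (fun h => hnot (h ▸ hc))

end MDSExtension

section Twist

variable {F : Type*} [Field F] {k : ℕ} {θ : F}

noncomputable def twist (k : ℕ) (θ : F) : F[X] →ₗ[F] F[X] :=
  LinearMap.id + (lcoeff F (k - 1)).smulRight (C θ * X ^ k)

theorem twist_apply (p : F[X]) : twist k θ p = p + C (p.coeff (k - 1) * θ) * X ^ k := by
  simp [twist, smul_eq_C_mul, mul_assoc]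

theorem coeff_twist_sub_one (hk : 1 ≤ k) (p : F[X]) :
    (twist k θ p).coeff (k - 1) = p.coeff (k - 1) := by
  rw [twist_apply, coeff_add, coeff_C_mul_X_pow, if_neg (by omega), add_zero]

theorem coeff_twist_self {p : F[X]} (hp : p ∈ degreeLT F k) :
    (twist k θ p).coeff k = p.coeff (k - 1) * θ := by
  rw [twist_apply, coeff_add, coeff_C_mul_X_pow, if_pos rfl,
    coeff_eq_zero_of_degree_lt (mem_degreeLT.mp hp), zero_add]

theorem twist_injective (hk : 1 ≤ k) : Function.Injective (twist k θ) := by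
  refine (injective_iff_map_eq_zero _).mpr fun p hp => ?_
  have hcoeff : p.coeff (k - 1) = 0 := by
    rw [← coeff_twist_sub_one (θ := θ) hk, hp, coeff_zero]
  simpa [twist_apply, hcoeff] using hp

theorem natDegree_twist_le {p : F[X]} (hp : p ∈ degreeLT F k) : (twist k θ p).natDegree ≤ k := by
  rw [twist_apply]
  refine natDegree_add_le_of_degree_le ?_ (natDegree_C_mul_X_pow_le _ _)
  exact (natDegree_le_iff_degree_le.mpr (mem_degreeLT.mp hp).le)

theorem twist_ne_X_pow (hk : 1 ≤ k) (hθ : θ ≠ 0) {p : F[X]} (hp : p ∈ degreeLT F k) :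
    twist k θ p ≠ X ^ (k - 1) := by
  intro h
  have hlast : p.coeff (k - 1) = 1 := by
    rw [← coeff_twist_sub_one (θ := θ) hk, h, coeff_X_pow_self]
  have htop := coeff_twist_self (θ := θ) hp
  rw [h, coeff_X_pow, if_neg (by omega), hlast, one_mul] at htop
  exact hθ htop.symm

theorem twist_sum_C_mul_X_pow (hk : 1 ≤ k) (f : ℕ → F) :
    twist k θ (∑ i ∈ range k, C (f i) * X ^ i) =
      (∑ i ∈ range (k - 1), C (f i) * X ^ i) + C (f (k - 1)) * (X ^ (k - 1) + C θ * X ^ k) := by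
  obtain ⟨m, rfl⟩ : ∃ m, k = m + 1 := ⟨k - 1, by omega⟩
  have hcoeff : (∑ i ∈ range (m + 1), C (f i) * X ^ i).coeff m = f m := by
    simp [finsetSum_coeff]
  rw [twist_apply, add_tsub_cancel_right, hcoeff, sum_range_succ, C_mul]
  ring

theorem Sset_eq_image_twist (hk : 1 ≤ k) : Sset F k θ = twist k θ '' degreeLT F k := by
  ext q
  constructor
  · rintro ⟨f, rfl⟩
    refine ⟨∑ i ∈ range k, C (f i) * X ^ i, ?_, twist_sum_C_mul_X_pow hk f⟩
    exact Submodule.sum_mem _ fun i hi => mem_degreeLT.mpr <|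
      (degree_C_mul_X_pow_le _ _).trans_lt (by exact_mod_cast mem_range.mp hi)
  · rintro ⟨p, hp, rfl⟩
    refine ⟨p.coeff, ?_⟩
    have hdeg : p.natDegree < k := by
      rcases eq_or_ne p 0 with rfl | hp0
      · simp only [natDegree_zero]; omega
      · exact (natDegree_lt_iff_degree_lt hp0).mpr (mem_degreeLT.mp hp)
    rw [← twist_sum_C_mul_X_pow hk, ← as_sum_range_C_mul_X_pow' p hdeg]

end Twist

section TwistedReedSolomon

variable {F : Type*} [Field F] {n k : ℕ} {θ : F} {α : Fin n → F}

noncomputable def evalVec (α : Fin n → F) : F[X] →ₗ[F] (Fin n → F) :=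
  LinearMap.pi fun j => leval (α j)

theorem sub_natDegree_le_hammingNorm_evalVec [DecidableEq F] (hα : Function.Injective α)
    {q : F[X]} (hq : q ≠ 0) : n - q.natDegree ≤ hammingNorm (evalVec α q) := by
  have hroots : #{j | q.eval (α j) = 0} ≤ q.natDegree := by
    by_contra! h
    refine hq (eq_zero_of_natDegree_lt_card_of_eval_eq_zero q
      (f := fun j : {j // q.eval (α j) = 0} => α j) (hα.comp Subtype.val_injective)
      (fun j => j.2) ?_)
    rwa [Fintype.card_subtype]
  have hsplit := card_filter_add_card_filter_not (s := univ) fun j : Fin n => q.eval (α j) = 0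
  rw [card_univ, Fintype.card_fin] at hsplit
  have hnorm : hammingNorm (evalVec α q) = #{j | ¬q.eval (α j) = 0} := rfl
  omega

noncomputable def trsCode (α : Fin n → F) (k : ℕ) (θ : F) : Submodule F (Fin n → F) :=
  LinearMap.range (evalVec α ∘ₗ twist k θ ∘ₗ (degreeLT F k).subtype)

theorem mem_trsCode {v : Fin n → F} :
    v ∈ trsCode α k θ ↔ ∃ p ∈ degreeLT F k, evalVec α (twist k θ p) = v := by
  simp [trsCode]

theorem TRS_eq_trsCode (hk : 1 ≤ k) : TRS α k θ = trsCode α k θ := by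
  ext v
  simp only [TRS, Sset_eq_image_twist hk, Set.mem_ofPred_eq, Set.mem_image, SetLike.mem_coe,
    mem_trsCode]
  constructor
  · rintro ⟨_, ⟨p, hp, rfl⟩, rfl⟩
    exact ⟨p, hp, rfl⟩
  · rintro ⟨p, hp, rfl⟩
    exact ⟨_, ⟨p, hp, rfl⟩, rfl⟩

theorem finrank_trsCode (hk : 1 ≤ k) (hkn : k < n) (hα : Function.Injective α) :
    finrank F (trsCode α k θ) = k := by
  have hinj : Function.Injective (evalVec α ∘ₗ twist k θ ∘ₗ (degreeLT F k).subtype) := by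
    refine (injective_iff_map_eq_zero _).mpr fun ⟨p, hp⟩ h => ?_
    have htwist : twist k θ p = 0 :=
      eq_zero_of_natDegree_lt_card_of_eval_eq_zero _ hα (fun j => congr_fun h j)
        ((natDegree_twist_le hp).trans_lt (by simpa using hkn))
    exact Subtype.ext (twist_injective hk (htwist.trans (map_zero _).symm))
  rw [trsCode, LinearMap.finrank_range_of_inj hinj, (degreeLTEquiv F k).finrank_eq,
    Module.finrank_fin_fun]

theorem sub_le_hammingNorm_of_mem_trsCode [DecidableEq F] (hα : Function.Injective α)
    {v : Fin n → F} (hv : v ∈ trsCode α k θ) (hv0 : v ≠ 0) : n - k ≤ hammingNorm v := by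
  obtain ⟨p, hp, rfl⟩ := mem_trsCode.mp hv
  have hq : twist k θ p ≠ 0 := fun h => hv0 (by rw [h, map_zero])
  exact (Nat.sub_le_sub_left (natDegree_twist_le hp) n).trans
    (sub_natDegree_le_hammingNorm_evalVec hα hq)

theorem distTo_trsCode_le [DecidableEq F] (hk : 1 ≤ k) (hkn : k < n)
    (hα : Function.Injective α) (u : Fin n → F) : distTo u (trsCode α k θ) ≤ n - k := by
  simpa only [finrank_trsCode hk hkn hα] using distTo_le_sub_finrank (trsCode α k θ) u

theorem distTo_evalVec_X_pow [DecidableEq F] (hk : 1 ≤ k) (hkn : k < n) (hθ : θ ≠ 0)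
    (hα : Function.Injective α) :
    distTo (evalVec α (X ^ (k - 1))) (trsCode α k θ) = n - k := by
  refine le_antisymm (distTo_trsCode_le hk hkn hα _)
    (le_distTo ⟨0, zero_mem _⟩ fun c hc => ?_)
  obtain ⟨p, hp, rfl⟩ := mem_trsCode.mp hc
  have hq : X ^ (k - 1) - twist k θ p ≠ 0 := sub_ne_zero.mpr (twist_ne_X_pow hk hθ hp).symm
  have hdeg : (X ^ (k - 1) - twist k θ p).natDegree ≤ k :=
    (natDegree_sub_le _ _).trans (max_le (by rw [natDegree_X_pow]; omega) (natDegree_twist_le hp))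
  rw [hammingDist_comm, hammingDist_eq_hammingNorm, ← map_neg, ← map_add, neg_add_eq_sub]
  exact (Nat.sub_le_sub_left hdeg n).trans (sub_natDegree_le_hammingNorm_evalVec hα hq)

end TwistedReedSolomon

theorem isDeepHole_iff_MDS_extension_general {F : Type*} [Field F] [DecidableEq F]
    (n k : ℕ) (hk1 : 1 < k) (hkn : k < n) (α : Fin n → F) (hα : Function.Injective α)
    (θ : F) (hθ : θ ≠ 0) (u : Fin n → F) :
    IsDeepHole (TRS α k θ) u ↔
      (Module.finrank F ↥(Submodule.span F (TRS α k θ ∪ {u})) = k + 1 ∧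
        minDist ((Submodule.span F (TRS α k θ ∪ {u}) : Submodule F (Fin n → F)) :
          Set (Fin n → F)) = n - k) := by
  have hk : 1 ≤ k := hk1.le
  have hdim := finrank_trsCode (θ := θ) hk hkn hα
  have hcov : covRad (trsCode α k θ : Set (Fin n → F)) = n - k :=
    covRad_eq_of_forall_distTo_le (distTo_trsCode_le hk hkn hα)
      (distTo_evalVec_X_pow hk hkn hθ hα)
  have hext := distTo_eq_sub_finrank_iff (V := trsCode α k θ) (by rw [hdim]; exact hkn)
    (by rw [hdim]; exact fun v hv hv0 => sub_le_hammingNorm_of_mem_trsCode hα hv hv0) u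
  rw [hdim] at hext
  rw [IsDeepHole, TRS_eq_trsCode hk, hcov, hext]

/-- `u` is a deep hole of `C = TRS_k(A, θ)` iff the code
`C' = C + 𝔽_q·u` spanned by `C` and `u` is an `[n, k+1]` MDS code, i.e.
`dim C' = k + 1` and the minimum distance of `C'` is `n - k`. -/
theorem isDeepHole_iff_MDS_extension {F : Type*} [Field F] [Fintype F] [DecidableEq F]
    (n k : ℕ) (hk1 : 1 < k) (hkn : k < n) (α : Fin n → F) (hα : Function.Injective α)
    (θ : F) (hθ : θ ≠ 0) (u : Fin n → F) :
    IsDeepHole (TRS α k θ) u ↔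
      (Module.finrank F ↥(Submodule.span F (TRS α k θ ∪ {u})) = k + 1 ∧
        minDist ((Submodule.span F (TRS α k θ ∪ {u}) : Submodule F (Fin n → F)) :
          Set (Fin n → F)) = n - k) :=
  isDeepHole_iff_MDS_extension_general n k hk1 hkn α hα θ hθ u
end
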